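/- Let r be a quasitriangular r-matrix on g, n ≥ 1, and 1 ≤ k ≤ m ≤ n. Then the map φ_{m,k}: g^m → g^n, (x₁,…,x_m) ↦ (x₁,…,x_{k−1}, x_k, x_k, …, x_k, x_{k+1}, …, x_m) (with x_k repeated n−m+1 times), is a Lie bialgebra homomorphism from (g^m, δ_{r^(m)}) to (g^n, δ_{r^(n)}). In particular, the diagonal embedding g → g^n is a Lie bialgebra homomorphism from (g, δ_r) to (g^n, δ_{r^(n)}). -/
import Mathlib

set_option linter.unusedSectionVars false

noncomputable section

open LinearMap

variable {k : Type*} [Field k] [CharZero k]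
variable {g : Type*} [LieRing g] [LieAlgebra k g] [FiniteDimensional k g]
variable {n : ℕ}

namespace Paper

/-- Skew-symmetry / symmetry / CYB for 2-tensors on `g` itself. -/
def IsSkewT (L : Module.Dual k g →ₗ[k] g) : Prop :=
  ∀ ξ η : Module.Dual k g, ξ (L η) = - η (L ξ)

def IsSymmT (S : Module.Dual k g →ₗ[k] g) : Prop :=
  ∀ ξ η : Module.Dual k g, ξ (S η) = η (S ξ)

def adT (x : g) (ξ : Module.Dual k g) : Module.Dual k g :=
  (LieAlgebra.ad k g x).dualMap ξ

def IsInvT (S : Module.Dual k g →ₗ[k] g) : Prop :=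
  ∀ (x : g) ξ, S (adT x ξ) = - ⁅x, S ξ⁆

def CYBform (L S : Module.Dual k g →ₗ[k] g) (ξ η ζ : Module.Dual k g) : k :=
  ξ ⁅(S - L) η, (S - L) ζ⁆ + η ⁅(L + S) ξ, (S - L) ζ⁆ + ζ ⁅(L + S) ξ, (L + S) η⁆

/-- Componentwise adjoint operator on the direct product `g^n = Fin n → g`. -/
def brN (x : Fin n → g) : (Fin n → g) →ₗ[k] (Fin n → g) where
  toFun y := fun i => ⁅x i, y i⁆
  map_add' y z := by funext i; simp
  map_smul' c y := by funext i; simp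

/-- The `j`-th component of a functional on `g^n`. -/
def coord (ξ : Module.Dual k (Fin n → g)) (j : Fin n) : Module.Dual k g :=
  ξ ∘ₗ LinearMap.single k (fun _ : Fin n => g) j

/-- Sharp map of `Alt^n(r) = (r, -r²¹, r, …)`, where `r^# = L + S`, `(r²¹)^# = S - L`
(positions are 0-based, so the paper's odd positions are the even indices). -/
def altN (L S : Module.Dual k g →ₗ[k] g) (ξ : Module.Dual k (Fin n → g)) :
    Fin n → g :=
  fun m => if Even (m : ℕ) then (L + S) (coord ξ m) else (S - L) (coord ξ m)

/-- Sharp map of `Mix^n(r) = Σ_{j<k} Σ_i (y_i)_j ∧ (x_i)_k`: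
`(Mix^n(r))^#ξ` has `m`-th component `−Σ_{k>m} r₊(ξ_k) − Σ_{j<m} r₋(ξ_j)`,
with `r₊ = L + S` and `r₋ = L − S`. -/
def mixN (L S : Module.Dual k g →ₗ[k] g) (ξ : Module.Dual k (Fin n → g)) :
    Fin n → g :=
  fun m => - (∑ j ∈ Finset.univ.filter (fun j : Fin n => m < j), (L + S) (coord ξ j))
    - ∑ j ∈ Finset.univ.filter (fun j : Fin n => j < m), (L - S) (coord ξ j)

/-- The skew part of `r^(n) = Alt^n(r) − Mix^n(r)`. -/
def skewN (L S : Module.Dual k g →ₗ[k] g) (ξ : Module.Dual k (Fin n → g)) :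
    Fin n → g :=
  fun m => L (coord ξ m)
    + (∑ j ∈ Finset.univ.filter (fun j : Fin n => m < j), (L + S) (coord ξ j))
    + ∑ j ∈ Finset.univ.filter (fun j : Fin n => j < m), (L - S) (coord ξ j)

/-- The symmetric part `(s, −s, s, …)` of `r^(n)`. -/
def symmN (S : Module.Dual k g →ₗ[k] g) (ξ : Module.Dual k (Fin n → g)) :
    Fin n → g :=
  fun m => if Even (m : ℕ) then S (coord ξ m) else - S (coord ξ m)

/-- Sharp map of `r^(n)` itself. -/
def rN (L S : Module.Dual k g →ₗ[k] g) (ξ : Module.Dual k (Fin n → g)) :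
    Fin n → g :=
  fun m => skewN L S ξ m + symmN S ξ m

/-- Skewness of a (not necessarily linear-map-bundled) 2-tensor on `g^n`. -/
def IsSkewF (T : Module.Dual k (Fin n → g) → (Fin n → g)) : Prop :=
  ∀ ξ η : Module.Dual k (Fin n → g), ξ (T η) = - η (T ξ)

def IsSymmF (T : Module.Dual k (Fin n → g) → (Fin n → g)) : Prop :=
  ∀ ξ η : Module.Dual k (Fin n → g), ξ (T η) = η (T ξ)

/-- ad-invariance, w.r.t. the componentwise bracket of `g^n`. -/
def IsInvF (T : Module.Dual k (Fin n → g) → (Fin n → g)) : Prop :=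
  ∀ (x : Fin n → g) (ξ : Module.Dual k (Fin n → g)) (i : Fin n),
    T (ξ ∘ₗ brN x) i = - ⁅x i, T ξ i⁆

/-- `CYB` of a 2-tensor on `g^n` decomposed into skew part `Lf` and symmetric part
`Sf`. -/
def CYBformF (Lf Sf : Module.Dual k (Fin n → g) → (Fin n → g))
    (ξ η ζ : Module.Dual k (Fin n → g)) : k :=
  ξ (fun i => ⁅Sf η i - Lf η i, Sf ζ i - Lf ζ i⁆)
    + η (fun i => ⁅Lf ξ i + Sf ξ i, Sf ζ i - Lf ζ i⁆)
    + ζ (fun i => ⁅Lf ξ i + Sf ξ i, Lf η i + Sf η i⁆)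

end Paper

open Paper

/-- The index map underlying `φ_{m,k} : g^m → g^n`,
`(x₁,…,x_m) ↦ (x₁,…,x_{k−1}, x_k,…,x_k, x_{k+1},…,x_m)` (`x_k` repeated `n−m+1`
times); `φ_{m,k} = funLeft (idxMap …)`. -/
def idxMap (m n kk : ℕ) (hk : 1 ≤ kk) (hkm : kk ≤ m) (hmn : m ≤ n) (i : Fin n) :
    Fin m :=
  if h1 : (i : ℕ) < kk then ⟨i, lt_of_lt_of_le h1 hkm⟩
  else if h2 : (i : ℕ) < kk + (n - m) then ⟨kk - 1, by omega⟩
  else ⟨(i : ℕ) - (n - m), by have := i.isLt; omega⟩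

namespace S13

open Finset

/-- sign of the S-part of the entry `(p,j)` of `r^(N)`. -/
def sgn (k : Type*) [Field k] {N : ℕ} (p j : Fin N) : k :=
  if j < p then -1 else if p < j then 1 else if Even (p : ℕ) then 1 else -1

variable {k : Type*} [Field k] [CharZero k]
variable {g : Type*} [LieRing g] [LieAlgebra k g] [FiniteDimensional k g]

lemma coord_single (N : ℕ) (Ξ : Module.Dual k (Fin N → g)) (j : Fin N) (v : g) :
    coord Ξ j v = Ξ (Pi.single j v) := rfl

lemma rN_eq_sum (L S : Module.Dual k g →ₗ[k] g) (N : ℕ)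
    (Ξ : Module.Dual k (Fin N → g)) (p : Fin N) :
    rN L S Ξ p = ∑ j : Fin N, (L + sgn k p j • S) (coord Ξ j) := by
  have hsplit : ∀ f : Fin N → g, ∑ j : Fin N, f j
      = f p + ((∑ j ∈ Finset.univ.filter (fun j => p < j), f j)
        + ∑ j ∈ Finset.univ.filter (fun j : Fin N => j < p), f j) := by
    intro f
    have huniv : (Finset.univ : Finset (Fin N))
        = insert p ((Finset.univ.filter (fun j => p < j))
            ∪ Finset.univ.filter (fun j : Fin N => j < p)) := by
      ext j
      simp only [Finset.mem_univ, Finset.mem_insert, Finset.mem_union, Finset.mem_filter,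
        true_and, true_iff]
      rcases lt_trichotomy p j with h | h | h
      · exact Or.inr (Or.inl h)
      · exact Or.inl h.symm
      · exact Or.inr (Or.inr h)
    have hdisj : Disjoint (Finset.univ.filter (fun j => p < j))
        (Finset.univ.filter (fun j : Fin N => j < p)) := by
      rw [Finset.disjoint_left]
      intro a ha hb
      simp only [Finset.mem_filter, Finset.mem_univ, true_and] at ha hb
      exact absurd (ha.trans hb) (lt_irrefl p)
    have hnm : p ∉ (Finset.univ.filter (fun j => p < j))
        ∪ Finset.univ.filter (fun j : Fin N => j < p) := by
      simp only [Finset.mem_union, Finset.mem_filter, Finset.mem_univ, true_and]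
      rintro (h | h) <;> exact absurd h (lt_irrefl p)
    conv_lhs => rw [huniv]
    rw [Finset.sum_insert hnm, Finset.sum_union hdisj]
  rw [hsplit]
  have h1 : ∑ j ∈ Finset.univ.filter (fun j => p < j),
      (L + sgn k p j • S) (coord Ξ j)
      = ∑ j ∈ Finset.univ.filter (fun j => p < j), ((L + S) (coord Ξ j)) := by
    refine Finset.sum_congr rfl fun j hj => ?_
    simp only [Finset.mem_filter, Finset.mem_univ, true_and] at hj
    have : sgn k p j = 1 := by
      simp [sgn, hj, asymm hj]
    simp [this]
  have h2 : ∑ j ∈ Finset.univ.filter (fun j : Fin N => j < p),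
      (L + sgn k p j • S) (coord Ξ j)
      = ∑ j ∈ Finset.univ.filter (fun j : Fin N => j < p), ((L - S) (coord Ξ j)) := by
    refine Finset.sum_congr rfl fun j hj => ?_
    simp only [Finset.mem_filter, Finset.mem_univ, true_and] at hj
    have : sgn k p j = -1 := by
      simp [sgn, hj]
    simp [this, sub_eq_add_neg]
  rw [h1, h2]
  have hdiag : (L + sgn k p p • S) (coord Ξ p)
      = L (coord Ξ p) + (if Even (p : ℕ) then S (coord Ξ p) else - S (coord Ξ p)) := by
    by_cases hp : Even (p : ℕ)
    · simp [sgn, hp]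
    · simp [sgn, hp]
  rw [hdiag]
  simp only [rN, skewN, symmN]
  abel


lemma coord_comp_funLeft {N M : ℕ} (f : Fin N → Fin M)
    (Ξ : Module.Dual k (Fin N → g)) (j : Fin M) :
    coord (Ξ ∘ₗ LinearMap.funLeft k g f) j
      = ∑ i ∈ Finset.univ.filter (fun i => f i = j), coord Ξ i := by
  classical
  ext v
  have h1 : (fun i => (Pi.single j v : Fin M → g) (f i))
      = ∑ i ∈ Finset.univ.filter (fun i => f i = j), (Pi.single i v : Fin N → g) := by
    funext q
    rw [Finset.sum_apply]
    rw [Finset.sum_pi_single]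
    by_cases hq : f q = j
    · simp [hq, Pi.single_apply]
    · simp [hq, Pi.single_apply, Ne.symm hq]
  simp only [coord, LinearMap.coe_comp, Function.comp_apply, LinearMap.coe_single,
    LinearMap.funLeft_apply, LinearMap.sum_apply]
  rw [show (LinearMap.funLeft k g f) (Pi.single j v) = fun i => (Pi.single j v : Fin M → g) (f i) from rfl,
    h1, map_sum]

lemma coord_brN {N : ℕ} (Ξ : Module.Dual k (Fin N → g)) (y : Fin N → g) (i : Fin N) :
    coord (Ξ ∘ₗ brN y) i = adT (y i) (coord Ξ i) := by
  classical
  ext v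
  have h1 : (brN (k := k) y) (Pi.single i v) = Pi.single i ⁅y i, v⁆ := by
    funext q
    by_cases hq : q = i
    · subst hq; simp [brN]
    · simp [brN, Pi.single_apply, hq]
  simp only [coord, adT, LinearMap.coe_comp, Function.comp_apply, LinearMap.coe_single,
    LinearMap.dualMap_apply]
  rw [h1]
  rfl

lemma sum_fiber {N M : ℕ} (f : Fin N → Fin M) (G : Fin M → Module.Dual k g →ₗ[k] g)
    (Ξ : Module.Dual k (Fin N → g)) :
    ∑ j : Fin M, G j (coord (Ξ ∘ₗ LinearMap.funLeft k g f) j)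
      = ∑ i : Fin N, G (f i) (coord Ξ i) := by
  classical
  have h := Finset.sum_fiberwise_of_maps_to (s := (Finset.univ : Finset (Fin N)))
    (t := (Finset.univ : Finset (Fin M))) (g := f)
    (fun i _ => Finset.mem_univ (f i)) (fun i => G (f i) (coord Ξ i))
  rw [← h]
  refine Finset.sum_congr rfl fun j _ => ?_
  rw [coord_comp_funLeft, map_sum]
  refine Finset.sum_congr rfl fun i hi => ?_
  simp only [Finset.mem_filter, Finset.mem_univ, true_and] at hi
  rw [hi]


lemma rN_comp {n m : ℕ} (L S : Module.Dual k g →ₗ[k] g) (f : Fin n → Fin m)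
    (Ξ : Module.Dual k (Fin n → g)) (i : Fin n) :
    rN (n := m) L S (Ξ ∘ₗ LinearMap.funLeft k g f) (f i)
      = rN L S Ξ i
        + ∑ i' : Fin n, (sgn k (f i) (f i') - sgn k i i') • S (coord Ξ i') := by
  rw [rN_eq_sum, rN_eq_sum, sum_fiber f (fun j => L + sgn k (f i) j • S),
    ← Finset.sum_add_distrib]
  refine Finset.sum_congr rfl fun i' _ => ?_
  simp only [LinearMap.add_apply, LinearMap.smul_apply, sub_smul]
  abel

lemma idx_mono {m kk : ℕ} (hk : 1 ≤ kk) (hkm : kk ≤ m) (hmn : m ≤ n)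
    {i i' : Fin n} (h : i ≤ i') :
    idxMap m n kk hk hkm hmn i ≤ idxMap m n kk hk hkm hmn i' := by
  rw [Fin.le_def] at h ⊢
  unfold idxMap
  split_ifs <;> simp only [Fin.val_mk] <;> omega

lemma sgn_key {m kk : ℕ} (hk : 1 ≤ kk) (hkm : kk ≤ m) (hmn : m ≤ n)
    {i i' : Fin n}
    (h : idxMap m n kk hk hkm hmn i ≠ idxMap m n kk hk hkm hmn i') :
    sgn k (idxMap m n kk hk hkm hmn i) (idxMap m n kk hk hkm hmn i')
      = sgn k i i' := by
  set p := idxMap m n kk hk hkm hmn i with hp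
  set p' := idxMap m n kk hk hkm hmn i' with hp'
  rcases lt_trichotomy p p' with hlt | heq | hgt
  · have hii : i < i' := by
      by_contra hco
      push_neg at hco
      exact absurd (idx_mono hk hkm hmn hco) (not_le_of_gt hlt)
    rw [sgn, sgn, if_neg (asymm hlt), if_pos hlt, if_neg (asymm hii), if_pos hii]
  · exact absurd heq h
  · have hii : i' < i := by
      by_contra hco
      push_neg at hco
      exact absurd (idx_mono hk hkm hmn hco) (not_le_of_gt hgt)
    rw [sgn, sgn, if_pos hgt, if_pos hii]

end S13
/-- Let `r` be a quasitriangular `r`-matrix on `g` (`r^# = L+S`) and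
`1 ≤ k ≤ m ≤ n`.  Then `φ_{m,k} : g^m → g^n` is a Lie bialgebra homomorphism from
`(g^m, δ_{r^(m)})` to `(g^n, δ_{r^(n)})`: it is a Lie algebra homomorphism and it
intertwines the cobrackets `δ_{r^(m)}(x) = ad_x r^(m)` and `δ_{r^(n)}`. -/
theorem statement13 (L S : Module.Dual k g →ₗ[k] g)
    (hL : IsSkewT L) (hS : IsSymmT S) (hSinv : IsInvT S)
    (hCYB : ∀ ξ η ζ : Module.Dual k g, CYBform L S ξ η ζ = 0)
    (m kk : ℕ) (hk : 1 ≤ kk) (hkm : kk ≤ m) (hmn : m ≤ n) :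
    -- `φ_{m,k}` is a Lie algebra homomorphism `g^m → g^n` …
    (∀ x y : Fin m → g,
      LinearMap.funLeft k g (idxMap m n kk hk hkm hmn) (fun i => ⁅x i, y i⁆)
        = fun i => ⁅(LinearMap.funLeft k g (idxMap m n kk hk hkm hmn) x) i,
            (LinearMap.funLeft k g (idxMap m n kk hk hkm hmn) y) i⁆) ∧
    -- … intertwining `δ_{r^(m)}` with `δ_{r^(n)}` (so a Lie bialgebra homomorphism):
    (∀ (x : Fin m → g) (Ξ : Module.Dual k (Fin n → g)),
      LinearMap.funLeft k g (idxMap m n kk hk hkm hmn)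
        (fun j => ⁅x j, rN (n := m) L S
              (Ξ ∘ₗ LinearMap.funLeft k g (idxMap m n kk hk hkm hmn)) j⁆
          + rN (n := m) L S
              ((Ξ ∘ₗ LinearMap.funLeft k g (idxMap m n kk hk hkm hmn)) ∘ₗ brN x) j)
      = fun i => ⁅(LinearMap.funLeft k g (idxMap m n kk hk hkm hmn) x) i, rN L S Ξ i⁆
          + rN L S
            (Ξ ∘ₗ brN (LinearMap.funLeft k g (idxMap m n kk hk hkm hmn) x)) i) := by
  classical
  refine ⟨fun x y => rfl, fun x Ξ => ?_⟩
  set f := idxMap m n kk hk hkm hmn with hf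
  funext i
  simp only [LinearMap.funLeft_apply]
  have hcomp : (Ξ ∘ₗ LinearMap.funLeft k g f) ∘ₗ brN x
      = (Ξ ∘ₗ brN (LinearMap.funLeft k g f x)) ∘ₗ LinearMap.funLeft k g f :=
    LinearMap.ext fun y => rfl
  rw [hcomp, S13.rN_comp, S13.rN_comp]
  have hfx : (LinearMap.funLeft k g f x) i = x (f i) := rfl
  rw [lie_add]
  have hcancel :
      ⁅x (f i), ∑ i' : Fin n,
          (S13.sgn k (f i) (f i') - S13.sgn k i i') • S (coord Ξ i')⁆
        + ∑ i' : Fin n, (S13.sgn k (f i) (f i') - S13.sgn k i i') • S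
            (coord (Ξ ∘ₗ brN (LinearMap.funLeft k g f x)) i') = 0 := by
    rw [show ⁅x (f i), ∑ i' : Fin n,
          (S13.sgn k (f i) (f i') - S13.sgn k i i') • S (coord Ξ i')⁆
        = (LieAlgebra.ad k g (x (f i))) (∑ i' : Fin n,
          (S13.sgn k (f i) (f i') - S13.sgn k i i') • S (coord Ξ i')) from rfl,
      map_sum, ← Finset.sum_add_distrib]
    refine Finset.sum_eq_zero fun i' _ => ?_
    rw [S13.coord_brN]
    have hy : (LinearMap.funLeft k g f x) i' = x (f i') := rfl
    rw [hy, map_smul, hSinv, LieAlgebra.ad_apply]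
    by_cases hc : f i' = f i
    · rw [hc, smul_neg, add_neg_cancel]
    · have h0 : S13.sgn k (f i) (f i') - S13.sgn k i i' = 0 := by
        rw [S13.sgn_key hk hkm hmn (fun h => hc (h.symm)), sub_self]
      rw [h0, zero_smul, zero_smul]; simp
  linear_combination (norm := abel) hcancel
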